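/- Let Z ⊆ {0,1}^n be a code of size N with distance distribution (A_w)_{w=0}^n. Then the quadratic discrepancy of Z satisfies D^{L2}(Z) = Λ_n − (1/N)·Σ_{w=1}^n A_w·λ(w), where Λ_n = (n/2^{n+1})·C(2n,n). -/

import Mathlib

/-!
Expanding the square and summing over the centres turns the discrepancy into a double sum over
pairs `(z, z')` of the kernel `∑ₜ |B(z,t) ∩ B(z',t)|`, and summing over the radii this kernel is
`(n+1)·2ⁿ - ∑ₓ max (d(x,z), d(x,z'))`. Since `2·max a b = a + b + |a - b|`, the last sum is
`n·2ⁿ⁻¹ + λ(d(z,z'))`: if `w = d(z,z')`, then `d(x,z) - d(x,z') = 2a - w` where `a` counts the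
coordinates among the `w` on which `z, z'` differ where `x` disagrees with `z`, so `a` is binomially
distributed and `∑ₐ C(w,a)·|2a - w|` telescopes to `2w·C(w-1, ⌊(w-1)/2⌋)`. The same computation
over all pairs of the cube, with Vandermonde's identity, produces the constant `Λₙ`.
-/

/-- The quadratic discrepancy of a code `Z ⊆ {0,1}^n`. -/
noncomputable def disc (n : ℕ) (Z : Finset (Fin n → Bool)) : ℝ :=
  ∑ t ∈ Finset.range (n + 1), ∑ x : Fin n → Bool,
    ((Z.card : ℝ)⁻¹ * ((Z.filter (fun z => hammingDist x z ≤ t)).card : ℝ)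
      - ((2 : ℝ) ^ n)⁻¹ *
          ((Finset.univ.filter (fun z : Fin n → Bool => hammingDist x z ≤ t)).card : ℝ)) ^ 2

/-- The distance distribution `A_w = (1/N)·|{(z,z') ∈ Z×Z : d(z,z') = w}|` of a code. -/
noncomputable def distDistr (n : ℕ) (Z : Finset (Fin n → Bool)) (w : ℕ) : ℝ :=
  (Z.card : ℝ)⁻¹ * (((Z ×ˢ Z).filter (fun p => hammingDist p.1 p.2 = w)).card : ℝ)

/-- `λ(w) = 2^{n−w}·w·C(w−1, ⌈w/2⌉−1)`. -/
noncomputable def lam (n w : ℕ) : ℝ :=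
  (2 : ℝ) ^ (n - w) * w * Nat.choose (w - 1) ((w + 1) / 2 - 1)

open Finset

theorem Finset.sum_powerset_union_inter {α M : Type*} [DecidableEq α] [AddCommMonoid M]
    {T R : Finset α} (h : Disjoint T R) (g : Finset α → M) :
    ∑ s ∈ (T ∪ R).powerset, g (s ∩ T) = 2 ^ #R • ∑ s ∈ T.powerset, g s := by
  induction R using Finset.induction_on with
  | empty =>
    rw [union_empty, card_empty, pow_zero, one_smul]
    exact sum_congr rfl fun s hs => by rw [inter_eq_left.2 (mem_powerset.1 hs)]
  | insert a R ha ih =>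
    have haT : a ∉ T := disjoint_right.1 h (mem_insert_self a R)
    rw [union_insert, sum_powerset_insert (by simp [ha, haT])]
    simp only [insert_inter_of_notMem haT]
    rw [ih (h.mono_right (subset_insert a R)), card_insert_of_notMem ha, pow_succ, mul_smul,
      two_smul, smul_add]

-- `C(v+1,a)·(v+1-2a) = (v+1)·(C(v,a) - C(v,a-1))`, so the partial sums telescope.
theorem Int.sum_range_choose_mul_sub_two_mul (v m : ℕ) :
    ∑ a ∈ Finset.range (m + 1), ((v + 1).choose a : ℤ) * (v + 1 - 2 * a) = (v + 1) * v.choose m := by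
  induction m with
  | zero => simp
  | succ m ih =>
    have pascal : ((v + 1).choose (m + 1) : ℤ) = v.choose m + v.choose (m + 1) := by
      exact_mod_cast Nat.choose_succ_succ v m
    have absorb : ((v : ℤ) + 1) * v.choose m = (v + 1).choose (m + 1) * (m + 1) := by
      exact_mod_cast Nat.add_one_mul_choose_eq v m
    rw [sum_range_succ, ih]
    push_cast
    linear_combination ((v : ℤ) + 1) * pascal + 2 * absorb

-- `w - 2 * a` is truncated subtraction: only the terms with `2a < w` contribute.
theorem Nat.sum_range_choose_mul_sub_two_mul (w : ℕ) :
    ∑ a ∈ range (w + 1), w.choose a * (w - 2 * a) = w * (w - 1).choose ((w - 1) / 2) := by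
  obtain _ | v := w
  · simp
  have truncate : ∑ a ∈ range (v / 2 + 1), (v + 1).choose a * (v + 1 - 2 * a) =
      ∑ a ∈ range (v + 1 + 1), (v + 1).choose a * (v + 1 - 2 * a) :=
    sum_subset (range_subset_range.2 (by omega)) fun a _ ha => by
      rw [mem_range, not_lt] at ha
      rw [Nat.sub_eq_zero_of_le (by omega), mul_zero]
  rw [← truncate, Nat.add_sub_cancel]
  apply Nat.cast_injective (R := ℤ)
  push_cast
  rw [← Int.sum_range_choose_mul_sub_two_mul]
  refine sum_congr rfl fun a ha => ?_
  rw [Nat.cast_sub (by simp at ha; omega)]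
  push_cast
  ring

theorem Nat.sum_range_choose_mul_dist_two_mul (w : ℕ) :
    ∑ a ∈ range (w + 1), w.choose a * Nat.dist (2 * a) w =
      2 * (w * (w - 1).choose ((w - 1) / 2)) := by
  have reflect : ∑ a ∈ range (w + 1), w.choose a * (2 * a - w) =
      ∑ a ∈ range (w + 1), w.choose a * (w - 2 * a) := by
    rw [← sum_range_reflect]
    refine sum_congr rfl fun a ha => ?_
    rw [mem_range] at ha
    rw [Nat.add_sub_cancel, Nat.choose_symm (by omega)]
    congr 1
    omega
  simp only [Nat.dist, mul_add, sum_add_distrib, reflect, Nat.sum_range_choose_mul_sub_two_mul]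
  ring

theorem Nat.sum_range_two_mul_choose_mul_dist (n : ℕ) :
    ∑ s ∈ range (2 * n + 1), (2 * n).choose s * Nat.dist s n = n * (2 * n).choose n := by
  have h := Nat.sum_range_choose_mul_dist_two_mul (2 * n)
  simp only [Nat.dist_mul_left, mul_left_comm _ 2, ← mul_sum] at h
  obtain _ | k := n
  · simp
  have central : 2 * (k + 1) * (2 * k + 1).choose k = (k + 1) * (2 * (k + 1)).choose (k + 1) := by
    have := Nat.add_one_mul_choose_eq (2 * k + 1) k
    rw [show 2 * (k + 1) = 2 * k + 1 + 1 by ring]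
    linarith
  rw [show (2 * (k + 1) - 1) / 2 = k by omega, show 2 * (k + 1) - 1 = 2 * k + 1 by omega,
    mul_assoc 2] at h
  linarith

theorem Nat.sum_range_sum_range_choose_mul_choose_smul {M : Type*} [AddCommMonoid M]
    (m n : ℕ) (F : ℕ → M) :
    ∑ i ∈ range (m + 1), ∑ j ∈ range (n + 1), (m.choose i * n.choose j) • F (i + j) =
      ∑ s ∈ range (m + n + 1), (m + n).choose s • F s := by
  rw [← sum_product', ← sum_fiberwise_of_maps_to (g := fun p => p.1 + p.2)
    (t := range (m + n + 1)) fun p hp => by simp only [mem_product, mem_range] at hp ⊢; omega]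
  refine sum_congr rfl fun s _ => ?_
  rw [Nat.add_choose_eq, sum_smul]
  calc _ = ∑ p ∈ range (m + 1) ×ˢ range (n + 1) with p.1 + p.2 = s,
        (m.choose p.1 * n.choose p.2) • F s :=
        sum_congr rfl fun p hp => by rw [(mem_filter.1 hp).2]
    _ = _ := by
      refine sum_subset (fun p hp => by simpa using (mem_filter.1 hp).2) fun p hs hp => ?_
      rw [HasAntidiagonal.mem_antidiagonal] at hs
      simp only [mem_filter, mem_product, mem_range, hs, and_true, not_and_or, not_lt] at hp
      rcases hp with hm | hn
      · rw [Nat.choose_eq_zero_of_lt hm, zero_mul, zero_smul]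
      · rw [Nat.choose_eq_zero_of_lt hn, mul_zero, zero_smul]

theorem Nat.two_mul_sum_range_choose_mul_choose_mul_max (n : ℕ) :
    2 * ∑ i ∈ range (n + 1), ∑ j ∈ range (n + 1), n.choose i * n.choose j * max i j =
      n * 4 ^ n + n * (2 * n).choose n := by
  have vandermonde := Nat.sum_range_sum_range_choose_mul_choose_smul (M := ℕ) n n
  simp only [smul_eq_mul, ← two_mul] at vandermonde
  have sum_add : ∑ i ∈ range (n + 1), ∑ j ∈ range (n + 1), n.choose i * n.choose j * (i + j) =
      n * 4 ^ n := by
    rw [(vandermonde fun s => s).trans (sum_congr rfl fun s _ => mul_comm _ _),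
      Nat.sum_range_mul_choose]
    obtain _ | k := n
    · simp
    rw [show 2 * (k + 1) - 1 = 2 * k + 1 by omega, show (4 : ℕ) = 2 ^ 2 by rfl, ← pow_mul]
    ring
  have sum_dist : ∑ i ∈ range (n + 1), ∑ j ∈ range (n + 1),
      n.choose i * n.choose j * Nat.dist i j = n * (2 * n).choose n := by
    rw [← Nat.sum_range_two_mul_choose_mul_dist, ← vandermonde]
    refine sum_congr rfl fun i _ => ?_
    rw [← sum_range_reflect]
    refine sum_congr rfl fun j hj => ?_
    rw [mem_range] at hj
    rw [Nat.add_sub_cancel, Nat.choose_symm (by omega)]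
    congr 1
    simp only [Nat.dist]
    omega
  rw [← sum_add, ← sum_dist, mul_sum, ← sum_add_distrib]
  refine sum_congr rfl fun i _ => ?_
  rw [mul_sum, ← sum_add_distrib]
  refine sum_congr rfl fun j _ => ?_
  have : 2 * max i j = i + j + Nat.dist i j := by simp only [Nat.dist]; omega
  rw [mul_left_comm, this]
  ring

theorem Finset.sum_sub_sq_of_sum_eq {α : Type*} {s : Finset α} {g h : α → ℝ}
    (h_const : ∀ x ∈ s, ∀ y ∈ s, h x = h y) (h_sum : ∑ x ∈ s, g x = ∑ x ∈ s, h x) :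
    ∑ x ∈ s, (g x - h x) ^ 2 = ∑ x ∈ s, g x ^ 2 - ∑ x ∈ s, h x ^ 2 := by
  obtain rfl | ⟨x₀, hx₀⟩ := s.eq_empty_or_nonempty
  · simp
  have cross : ∑ x ∈ s, g x * h x = ∑ x ∈ s, h x ^ 2 := by
    rw [sum_congr rfl fun x hx => by rw [h_const x hx x₀ hx₀], ← sum_mul, h_sum, sum_mul]
    exact sum_congr rfl fun x hx => by rw [h_const x hx x₀ hx₀, sq]
  simp only [sub_sq, sum_add_distrib, sum_sub_distrib, mul_assoc, ← mul_sum, cross]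
  ring

section HammingCube

variable {ι : Type*} [Fintype ι]

noncomputable def ballFraction (W : Finset (ι → Bool)) (t : ℕ) (x : ι → Bool) : ℝ :=
  (#W : ℝ)⁻¹ * #{z ∈ W | hammingDist x z ≤ t}

variable [DecidableEq ι]

theorem sum_apply_card_filter_ne {M : Type*} [AddCommMonoid M] (T : Finset ι) (z : ι → Bool)
    (f : ℕ → M) :
    ∑ x : ι → Bool, f #{i ∈ T | x i ≠ z i} =
      2 ^ #Tᶜ • ∑ m ∈ range (#T + 1), (#T).choose m • f m := by
  let flipSet : (ι → Bool) ≃ Finset ι :=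
    { toFun x := {i | x i ≠ z i}
      invFun s i := if i ∈ s then !z i else z i
      left_inv x := by funext i; cases hx : x i <;> cases hz : z i <;> simp [hx, hz]
      right_inv s := by ext i; by_cases h : i ∈ s <;> simp [h] }
  rw [← sum_powerset_apply_card, ← sum_powerset_union_inter disjoint_compl_right, union_compl,
    powerset_univ]
  exact Fintype.sum_equiv flipSet _ _ fun x => by congr 2; ext i; simp [flipSet, and_comm]

theorem sum_apply_hammingDist {M : Type*} [AddCommMonoid M] (z : ι → Bool) (f : ℕ → M) :
    ∑ x : ι → Bool, f (hammingDist x z) =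
      ∑ m ∈ range (Fintype.card ι + 1), (Fintype.card ι).choose m • f m := by
  have h := sum_apply_card_filter_ne univ z f
  rwa [compl_univ, card_empty, pow_zero, one_smul, card_univ] at h

theorem card_filter_hammingDist_le_eq (z z' : ι → Bool) (t : ℕ) :
    #{x | hammingDist x z ≤ t} = #{x | hammingDist x z' ≤ t} := by
  simp only [card_filter, sum_apply_hammingDist _ fun m => if m ≤ t then 1 else 0]

theorem sum_hammingDist (z : ι → Bool) :
    ∑ x : ι → Bool, hammingDist x z = Fintype.card ι * 2 ^ (Fintype.card ι - 1) := by
  rw [sum_apply_hammingDist z fun m => m, ← Nat.sum_range_mul_choose]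
  exact sum_congr rfl fun m _ => by rw [smul_eq_mul, mul_comm]

-- Where `z` and `z'` differ, `x` disagrees with exactly one of them; elsewhere with both or none.
theorem dist_hammingDist_hammingDist (x z z' : ι → Bool) :
    Nat.dist (hammingDist x z) (hammingDist x z') =
      Nat.dist (2 * #{i ∈ ({i | z i ≠ z' i} : Finset ι) | x i ≠ z i}) (hammingDist z z') := by
  set S : Finset ι := {i | z i ≠ z' i}
  have split (y : ι → Bool) : hammingDist x y =
      #{i ∈ S | x i ≠ y i} + #{i ∈ Sᶜ | x i ≠ y i} := by
    simp only [hammingDist, card_filter, sum_add_sum_compl]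
  have on_diff : #{i ∈ S | x i ≠ z' i} = #{i ∈ S | ¬ x i ≠ z i} :=
    congrArg card <| filter_congr fun i hi => by
      have : z i ≠ z' i := (mem_filter.1 hi).2
      revert this; cases x i <;> cases z i <;> cases z' i <;> decide
  have off_diff : #{i ∈ Sᶜ | x i ≠ z' i} = #{i ∈ Sᶜ | x i ≠ z i} :=
    congrArg card <| filter_congr fun i hi => by
      rw [show z' i = z i from (by simpa [S] using hi : z i = z' i).symm]
  have total := card_filter_add_card_filter_not (s := S) fun i => x i ≠ z i
  change _ = Nat.dist _ #S
  rw [split z, split z', on_diff, off_diff, ← total]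
  simp only [Nat.dist]
  omega

def sumMaxHammingDist (z z' : ι → Bool) : ℕ :=
  ∑ x, max (hammingDist x z) (hammingDist x z')

theorem two_mul_sumMaxHammingDist (z z' : ι → Bool) :
    2 * sumMaxHammingDist z z' = Fintype.card ι * 2 ^ Fintype.card ι +
      2 ^ (Fintype.card ι - hammingDist z z') *
        (2 * (hammingDist z z' * (hammingDist z z' - 1).choose ((hammingDist z z' - 1) / 2))) := by
  have two_mul_max (a b : ℕ) : 2 * max a b = a + b + Nat.dist a b := by
    simp only [Nat.dist]; omega
  have sum_dist : ∑ x : ι → Bool, Nat.dist (hammingDist x z) (hammingDist x z') =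
      2 ^ (Fintype.card ι - hammingDist z z') *
        ∑ a ∈ range (hammingDist z z' + 1),
          (hammingDist z z').choose a * Nat.dist (2 * a) (hammingDist z z') := by
    simp only [dist_hammingDist_hammingDist _ z z', sum_apply_card_filter_ne _ z
      fun a => Nat.dist (2 * a) (hammingDist z z'), card_compl, smul_eq_mul]
    rfl
  have sum_add : ∑ x : ι → Bool, (hammingDist x z + hammingDist x z') =
      Fintype.card ι * 2 ^ Fintype.card ι := by
    rw [sum_add_distrib, sum_hammingDist, sum_hammingDist]
    obtain _ | n := Fintype.card ι
    · rfl
    · rw [Nat.add_sub_cancel, pow_succ]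
      ring
  rw [sumMaxHammingDist, mul_sum]
  simp only [two_mul_max, sum_add_distrib]
  rw [← sum_add_distrib, sum_add, sum_dist, Nat.sum_range_choose_mul_dist_two_mul]

theorem sumMaxHammingDist_eq_add_lam (z z' : ι → Bool) :
    (sumMaxHammingDist z z' : ℝ) =
      Fintype.card ι * 2 ^ Fintype.card ι / 2 + lam (Fintype.card ι) (hammingDist z z') := by
  have h := congrArg (Nat.cast : ℕ → ℝ) (two_mul_sumMaxHammingDist z z')
  push_cast at h
  rw [lam, show (hammingDist z z' + 1) / 2 - 1 = (hammingDist z z' - 1) / 2 by omega]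
  linarith

theorem two_mul_sum_sum_sumMaxHammingDist :
    2 * ∑ y : ι → Bool, ∑ y' : ι → Bool, sumMaxHammingDist y y' =
      2 ^ Fintype.card ι * (Fintype.card ι * 4 ^ Fintype.card ι +
        Fintype.card ι * (2 * Fintype.card ι).choose (Fintype.card ι)) := by
  set n := Fintype.card ι
  have fixed_center (x : ι → Bool) : ∑ y : ι → Bool, ∑ y' : ι → Bool,
      max (hammingDist x y) (hammingDist x y') =
        ∑ i ∈ range (n + 1), ∑ j ∈ range (n + 1), n.choose i * n.choose j * max i j := by
    simp only [hammingDist_comm x]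
    calc _ = ∑ y : ι → Bool, ∑ j ∈ range (n + 1), n.choose j • max (hammingDist y x) j :=
          sum_congr rfl fun y _ => sum_apply_hammingDist x _
      _ = ∑ j ∈ range (n + 1), ∑ i ∈ range (n + 1), n.choose j • n.choose i • max i j := by
          rw [sum_comm]
          exact sum_congr rfl fun j _ => by
            rw [← smul_sum, sum_apply_hammingDist x fun i => max i j, smul_sum]
      _ = _ := by
          rw [sum_comm]
          exact sum_congr rfl fun i _ => sum_congr rfl fun j _ => by
            simp only [smul_eq_mul]; ring
  simp only [sumMaxHammingDist]
  rw [sum_congr rfl fun y _ => sum_comm, sum_comm]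
  simp only [fixed_center, sum_const, card_univ, Fintype.card_fun, Fintype.card_bool, smul_eq_mul]
  rw [mul_left_comm, Nat.two_mul_sum_range_choose_mul_choose_mul_max]

theorem sum_ballFraction {W : Finset (ι → Bool)} (hW : W.Nonempty) (z₀ : ι → Bool) (t : ℕ) :
    ∑ x, ballFraction W t x = #{x | hammingDist x z₀ ≤ t} := by
  have double_count : ∑ x : ι → Bool, (#{z ∈ W | hammingDist x z ≤ t} : ℝ) =
      ∑ z ∈ W, (#{x | hammingDist x z ≤ t} : ℝ) := by
    simp only [natCast_card_filter]
    exact sum_comm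
  simp only [ballFraction, ← mul_sum, double_count, card_filter_hammingDist_le_eq _ z₀, sum_const,
    nsmul_eq_mul]
  exact inv_mul_cancel_left₀ (by exact_mod_cast hW.card_ne_zero) _

theorem ballFraction_univ_eq (t : ℕ) (x x' : ι → Bool) :
    ballFraction univ t x = ballFraction univ t x' := by
  simp only [ballFraction, hammingDist_comm x, hammingDist_comm x',
    card_filter_hammingDist_le_eq x x']

theorem sum_ballFraction_sq (W : Finset (ι → Bool)) (t : ℕ) :
    ∑ x, ballFraction W t x ^ 2 =
      (#W : ℝ)⁻¹ ^ 2 *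
        ∑ z ∈ W, ∑ z' ∈ W, (#{x | hammingDist x z ≤ t ∧ hammingDist x z' ≤ t} : ℝ) := by
  have sq_count (x : ι → Bool) : (#{z ∈ W | hammingDist x z ≤ t} : ℝ) ^ 2 =
      ∑ z ∈ W, ∑ z' ∈ W, if hammingDist x z ≤ t ∧ hammingDist x z' ≤ t then 1 else 0 := by
    simp only [natCast_card_filter, sq, sum_mul_sum, ite_zero_mul_ite_zero, mul_one]
  simp only [ballFraction, mul_pow, sq_count, ← mul_sum]
  simp only [natCast_card_filter]
  rw [sum_comm, sum_congr rfl fun z _ => sum_comm]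

theorem sum_range_card_filter_le_and_le_add_sumMaxHammingDist (z z' : ι → Bool) :
    ∑ t ∈ range (Fintype.card ι + 1), #{x | hammingDist x z ≤ t ∧ hammingDist x z' ≤ t} +
      sumMaxHammingDist z z' = (Fintype.card ι + 1) * 2 ^ Fintype.card ι := by
  have count_thresholds (m : ℕ) (hm : m ≤ Fintype.card ι) :
      #{t ∈ range (Fintype.card ι + 1) | m ≤ t} + m = Fintype.card ι + 1 := by
    rw [range_eq_Ico, Ico_filter_le, Nat.card_Ico]
    omega
  simp only [← max_le_iff, card_filter, sumMaxHammingDist]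
  rw [sum_comm, ← sum_add_distrib]
  simp only [← card_filter, count_thresholds _ (max_le hammingDist_le_card_fintype
    hammingDist_le_card_fintype), sum_const, card_univ, Fintype.card_fun, Fintype.card_bool,
    smul_eq_mul, mul_comm]

theorem sum_range_sum_ballFraction_sq {W : Finset (ι → Bool)} (hW : W.Nonempty) :
    ∑ t ∈ range (Fintype.card ι + 1), ∑ x, ballFraction W t x ^ 2 =
      (Fintype.card ι + 1) * 2 ^ Fintype.card ι -
        (#W : ℝ)⁻¹ ^ 2 * ∑ z ∈ W, ∑ z' ∈ W, (sumMaxHammingDist z z' : ℝ) := by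
  have kernel (z z' : ι → Bool) :
      ∑ t ∈ range (Fintype.card ι + 1), (#{x | hammingDist x z ≤ t ∧ hammingDist x z' ≤ t} : ℝ) =
        (Fintype.card ι + 1) * 2 ^ Fintype.card ι - sumMaxHammingDist z z' := by
    rw [eq_sub_iff_add_eq]
    exact_mod_cast sum_range_card_filter_le_and_le_add_sumMaxHammingDist z z'
  have swap : ∑ t ∈ range (Fintype.card ι + 1), ∑ z ∈ W, ∑ z' ∈ W,
      (#{x | hammingDist x z ≤ t ∧ hammingDist x z' ≤ t} : ℝ) =
        ∑ z ∈ W, ∑ z' ∈ W, ∑ t ∈ range (Fintype.card ι + 1),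
          (#{x | hammingDist x z ≤ t ∧ hammingDist x z' ≤ t} : ℝ) := by
    rw [sum_comm]
    exact sum_congr rfl fun z _ => sum_comm
  simp only [sum_ballFraction_sq, ← mul_sum, swap]
  simp only [kernel, sum_sub_distrib, sum_const, nsmul_eq_mul, mul_sub]
  have hW' : (#W : ℝ) ≠ 0 := by exact_mod_cast hW.card_ne_zero
  field_simp

end HammingCube

theorem sum_sum_lam_hammingDist (n : ℕ) (Z : Finset (Fin n → Bool)) :
    ∑ z ∈ Z, ∑ z' ∈ Z, lam n (hammingDist z z') =
      #Z * ∑ w ∈ Icc 1 n, distDistr n Z w * lam n w := by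
  obtain rfl | hZ := Z.eq_empty_or_nonempty
  · simp
  have hZ' : (#Z : ℝ) ≠ 0 := by exact_mod_cast hZ.card_ne_zero
  calc ∑ z ∈ Z, ∑ z' ∈ Z, lam n (hammingDist z z')
      = ∑ w ∈ range (n + 1), (#{p ∈ Z ×ˢ Z | hammingDist p.1 p.2 = w} : ℝ) * lam n w := by
        rw [← sum_product' (f := fun z z' => lam n (hammingDist z z')),
          ← sum_fiberwise_of_maps_to (g := fun p => hammingDist p.1 p.2) (t := range (n + 1))
            fun p _ => mem_range.2 (Nat.lt_succ_of_le (hammingDist_le_card_fintype.trans_eq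
              (Fintype.card_fin n)))]
        exact sum_congr rfl fun w _ => by
          rw [sum_congr rfl fun p hp => by rw [(mem_filter.1 hp).2], sum_const, nsmul_eq_mul]
    _ = ∑ w ∈ Icc 1 n, (#{p ∈ Z ×ˢ Z | hammingDist p.1 p.2 = w} : ℝ) * lam n w := by
        refine (sum_subset (fun w hw => by simp only [mem_Icc, mem_range] at hw ⊢; omega) fun w hw hw' => ?_).symm
        obtain rfl : w = 0 := by simp only [mem_range, mem_Icc, not_and_or] at hw hw'; omega
        simp [lam]
    _ = _ := by
        rw [mul_sum]
        exact sum_congr rfl fun w _ => by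
          rw [distDistr, ← mul_assoc, ← mul_assoc, mul_inv_cancel₀ hZ', one_mul]

theorem disc_eq_sub {n : ℕ} {Z : Finset (Fin n → Bool)} (hZ : Z.Nonempty) :
    disc n Z = ∑ t ∈ range (n + 1), ∑ x, ballFraction Z t x ^ 2 -
      ∑ t ∈ range (n + 1), ∑ x, ballFraction (univ : Finset (Fin n → Bool)) t x ^ 2 := by
  obtain ⟨z₀, -⟩ := id hZ
  have disc_eq : disc n Z = ∑ t ∈ range (n + 1), ∑ x,
      (ballFraction Z t x - ballFraction univ t x) ^ 2 := by
    simp [disc, ballFraction]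
  rw [disc_eq, ← sum_sub_distrib]
  exact sum_congr rfl fun t _ => sum_sub_sq_of_sum_eq
    (fun x _ y _ => ballFraction_univ_eq t x y)
    (by rw [sum_ballFraction hZ z₀, sum_ballFraction univ_nonempty z₀])

/-- **Stolarsky's invariance for the Hamming space**:
`D^{L2}(Z) = Λ_n − (1/N)·Σ_{w=1}^n A_w·λ(w)` where `Λ_n = (n/2^{n+1})·C(2n,n)`. -/
theorem stolarsky_invariance_hamming (n : ℕ) (Z : Finset (Fin n → Bool)) (hZ : Z.Nonempty) :
    disc n Z
      = (n : ℝ) / 2 ^ (n + 1) * Nat.choose (2 * n) n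
        - (Z.card : ℝ)⁻¹ * ∑ w ∈ Finset.Icc 1 n, distDistr n Z w * lam n w := by
  have hZ' : (#Z : ℝ) ≠ 0 := by exact_mod_cast hZ.card_ne_zero
  have sum_univ : ∑ y : Fin n → Bool, ∑ y', (sumMaxHammingDist y y' : ℝ) =
      2 ^ n * (n * (2 ^ n * 2 ^ n) + n * (2 * n).choose n) / 2 := by
    have h := two_mul_sum_sum_sumMaxHammingDist (ι := Fin n)
    rw [Fintype.card_fin, show 4 ^ n = 2 ^ n * 2 ^ n by rw [← mul_pow]; norm_num] at h
    rw [eq_div_iff two_ne_zero, mul_comm]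
    exact_mod_cast h
  have sum_Z : ∑ z ∈ Z, ∑ z' ∈ Z, (sumMaxHammingDist z z' : ℝ) =
      #Z * #Z * (n * 2 ^ n / 2) + #Z * ∑ w ∈ Icc 1 n, distDistr n Z w * lam n w := by
    simp only [sumMaxHammingDist_eq_add_lam, sum_add_distrib, sum_const, sum_sum_lam_hammingDist,
      Fintype.card_fin, nsmul_eq_mul]
    ring
  have energy_Z := sum_range_sum_ballFraction_sq hZ
  have energy_univ := sum_range_sum_ballFraction_sq (univ_nonempty (α := Fin n → Bool))
  simp only [Fintype.card_fin, card_univ, Fintype.card_fun, Fintype.card_bool]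
    at energy_Z energy_univ
  rw [disc_eq_sub hZ, energy_Z, energy_univ, sum_Z, sum_univ]
  push_cast
  field_simp
  ring
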